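/- arXiv:1011.2169 — 3 statements merged into one kernel-verified Lean document; each statement's English description precedes it below -/
import Mathlib

section
/- For every integer p ≥ 1, the alternating sum ∑_{k=0}^{2p} (-1)^k · C(2p,k) · C(4p−k,2p) · C(2p+k,k) equals (−1)^p · (3p)!/(p!)^3. -/
/-!
Writing `C(4p-k, 2p)` by Vandermonde's convolution as `∑ⱼ C(2p,j) C(2p-k, 2p-j)` and summing over
`k` first (an iterated forward difference of `x ↦ C(x, 2p)`) turns the sum into Dixon's alternating
sum `S(n) = ∑ⱼ (-1)^j C(2n,j)^3` at `n = p`. Zeilberger's algorithm yields the recurrence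
`(n+1)^2 S(n+1) = -3(3n+1)(3n+2) S(n)`, proved by telescoping against an explicit certificate, and
`(-1)^n (3n)!/(n!)^3` satisfies the same recurrence with the same initial value.
-/

open Finset

theorem alternating_sum_choose_mul_choose_add (m j s : ℕ) :
    ∑ k ∈ range (j + 1), (-1 : ℤ) ^ k * j.choose k * (m + k).choose (j + s)
      = (-1) ^ j * m.choose s := by
  rw [← congr_fun (fwdDiff_iter_choose s j) m, fwdDiff_iter_eq_sum_shift, mul_sum]
  refine sum_congr rfl fun k hk => ?_
  obtain ⟨i, rfl⟩ := Nat.exists_eq_add_of_le (Nat.lt_succ_iff.1 (mem_range.1 hk))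
  simp only [Nat.add_sub_cancel_left, smul_eq_mul, mul_one]
  rw [pow_add]
  ring_nf
  simp

theorem choose_mul_choose_two_mul_sub {n k : ℕ} (hk : k ≤ n) :
    n.choose k * (2 * n - k).choose n = ∑ j ∈ range (n + 1), n.choose j ^ 2 * j.choose k := by
  rw [show 2 * n - k = n + (n - k) by omega, Nat.add_choose_eq,
    Nat.sum_antidiagonal_eq_sum_range_succ_mk, mul_sum]
  refine sum_congr rfl fun j hj => ?_
  have hjn : j ≤ n := Nat.lt_succ_iff.1 (mem_range.1 hj)
  rcases le_or_gt k j with hkj | hjk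
  · rw [sq, mul_assoc, Nat.choose_mul hkj,
      ← Nat.choose_symm_of_eq_add (show n - k = (n - j) + (j - k) by omega)]
    ring
  · simp [Nat.choose_eq_zero_of_lt hjk, Nat.choose_eq_zero_of_lt (show n - k < n - j by omega)]

theorem alternating_sum_choose_mul_choose_two_mul_sub_mul_choose_add (n : ℕ) :
    ∑ k ∈ range (n + 1), (-1 : ℤ) ^ k * n.choose k * (2 * n - k).choose n * (n + k).choose k
      = ∑ j ∈ range (n + 1), (-1) ^ j * (n.choose j : ℤ) ^ 3 := by
  have expand : ∀ k ∈ range (n + 1),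
      (-1 : ℤ) ^ k * n.choose k * (2 * n - k).choose n * (n + k).choose k
        = ∑ j ∈ range (n + 1),
            (n.choose j : ℤ) ^ 2 * ((-1) ^ k * j.choose k * (n + k).choose k) := by
    intro k hk
    have h := congrArg (Nat.cast : ℕ → ℤ)
      (choose_mul_choose_two_mul_sub (Nat.lt_succ_iff.1 (mem_range.1 hk)))
    push_cast at h
    rw [mul_assoc _ (n.choose k : ℤ), h, mul_sum, sum_mul]
    exact sum_congr rfl fun j _ => by ring
  rw [sum_congr rfl expand, sum_comm]
  refine sum_congr rfl fun j hj => ?_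
  have hjn : j ≤ n := Nat.lt_succ_iff.1 (mem_range.1 hj)
  have inner : ∑ k ∈ range (n + 1), (-1 : ℤ) ^ k * j.choose k * (n + k).choose k
      = (-1) ^ j * n.choose j := by
    rw [← sum_subset (range_subset_range.2 (Nat.succ_le_succ hjn)) fun k _ hk => by
      simp [Nat.choose_eq_zero_of_lt (show j < k by simpa using hk)]]
    rw [← Nat.choose_symm hjn, ← alternating_sum_choose_mul_choose_add n j (n - j)]
    refine sum_congr rfl fun k _ => ?_
    rw [Nat.add_sub_cancel' hjn, Nat.choose_symm_add]
  rw [← mul_sum, inner]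
  ring

theorem Nat.cast_choose_mul_succ_eq {R : Type*} [CommRing R] (m k : ℕ) :
    (m.choose k : R) * (m + 1) = (m + 1).choose k * (m + 1 - k) := by
  rcases le_or_gt k (m + 1) with hk | hk
  · have h := congrArg (Nat.cast : ℕ → R) (Nat.choose_mul_succ_eq m k)
    push_cast [Nat.cast_sub hk] at h
    exact h
  · simp [Nat.choose_eq_zero_of_lt hk, Nat.choose_eq_zero_of_lt (show m < k by omega)]

def dixonPoly (n j : ℚ) : ℚ :=
  -116 + 207 * j - 147 * j ^ 2 + 48 * j ^ 3 - 6 * j ^ 4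
  + n * (-784 + 1113 * j - 594 * j ^ 2 + 132 * j ^ 3 - 9 * j ^ 4)
  + n ^ 2 * (-2084 + 2214 * j - 792 * j ^ 2 + 90 * j ^ 3)
  + n ^ 3 * (-2728 + 1932 * j - 348 * j ^ 2)
  + n ^ 4 * (-1760 + 624 * j)
  + n ^ 5 * (-448)

def dixonCertificate (n j : ℕ) : ℚ :=
  (-1) ^ j * dixonPoly n j * (j * (2 * n + 2).choose j) ^ 3

theorem dixonCertificate_succ_sub (n j : ℕ) :
    dixonCertificate n (j + 1) - dixonCertificate n j
      = 16 * (n + 1) ^ 3 * (2 * n + 1) ^ 3 * ((-1) ^ j *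
          ((n + 1) ^ 2 * ((2 * n + 2).choose j : ℚ) ^ 3
            + 3 * (3 * n + 1) * (3 * n + 2) * ((2 * n).choose j : ℚ) ^ 3)) := by
  -- Every binomial below is a polynomial multiple of `C(2n+2, j)` (whose support contains the
  -- others'), so the identity reduces to one between polynomials in `n` and `j`.
  have hb : ((2 * n + 2).choose (j + 1) : ℚ) * (j + 1) = (2 * n + 2) * (2 * n + 1).choose j := by
    exact_mod_cast (Nat.add_one_mul_choose_eq (2 * n + 1) j).symm
  have hz : ((2 * n + 1).choose j : ℚ) * (2 * n + 2) = (2 * n + 2).choose j * (2 * n + 2 - j) := by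
    have h := Nat.cast_choose_mul_succ_eq (R := ℚ) (2 * n + 1) j
    push_cast at h
    linear_combination h
  have hc : ((2 * n).choose j : ℚ) * (2 * n + 1) = (2 * n + 1).choose j * (2 * n + 1 - j) := by
    exact_mod_cast Nat.cast_choose_mul_succ_eq (R := ℚ) (2 * n) j
  have ha : (((j : ℚ) + 1) * (2 * n + 2).choose (j + 1)) ^ 3
      = ((2 * n + 2 - j) * (2 * n + 2).choose j) ^ 3 := by
    rw [show ((j : ℚ) + 1) * (2 * n + 2).choose (j + 1) = (2 * n + 2 - j) * (2 * n + 2).choose j by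
      linear_combination hb + hz]
  have hc' : ((2 * n + 2) * (2 * n + 1) * (2 * n).choose j : ℚ) ^ 3
      = ((2 * n + 2 - j) * (2 * n + 1 - j) * (2 * n + 2).choose j) ^ 3 := by
    rw [show ((2 * n + 2) * (2 * n + 1) * (2 * n).choose j : ℚ)
        = (2 * n + 2 - j) * (2 * n + 1 - j) * (2 * n + 2).choose j by
      linear_combination (2 * (n : ℚ) + 2) * hc + (2 * (n : ℚ) + 1 - j) * hz]
  simp only [dixonCertificate, Nat.cast_add, Nat.cast_one]
  linear_combination (norm := skip) (-1) ^ (j + 1) * dixonPoly n (j + 1) * ha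
    - (-1) ^ j * 6 * (3 * (n : ℚ) + 1) * (3 * n + 2) * hc'
  simp only [dixonPoly]
  ring

theorem alternating_sum_choose_pow_three_recurrence (n : ℕ) :
    ((n : ℚ) + 1) ^ 2 * ∑ j ∈ range (2 * n + 3), (-1) ^ j * ((2 * n + 2).choose j : ℚ) ^ 3
      = -(3 * (3 * (n : ℚ) + 1) * (3 * n + 2)) *
          ∑ j ∈ range (2 * n + 1), (-1) ^ j * ((2 * n).choose j : ℚ) ^ 3 := by
  have telescope := sum_range_sub (dixonCertificate n) (2 * n + 3)
  have hend : dixonCertificate n (2 * n + 3) = 0 := by simp [dixonCertificate]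
  have hstart : dixonCertificate n 0 = 0 := by simp [dixonCertificate]
  have htail : ∑ j ∈ range (2 * n + 3), (-1) ^ j * ((2 * n).choose j : ℚ) ^ 3
      = ∑ j ∈ range (2 * n + 1), (-1) ^ j * ((2 * n).choose j : ℚ) ^ 3 := by
    simp [sum_range_succ _ (2 * n + 1), sum_range_succ _ (2 * n + 2), Nat.choose_eq_zero_of_lt]
  simp only [dixonCertificate_succ_sub, hend, hstart, sub_zero, ← mul_sum] at telescope
  have hsplit : ∑ j ∈ range (2 * n + 3), (-1) ^ j *
        (((n : ℚ) + 1) ^ 2 * ((2 * n + 2).choose j : ℚ) ^ 3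
          + 3 * (3 * n + 1) * (3 * n + 2) * ((2 * n).choose j : ℚ) ^ 3)
      = ((n : ℚ) + 1) ^ 2 * ∑ j ∈ range (2 * n + 3), (-1) ^ j * ((2 * n + 2).choose j : ℚ) ^ 3
        + 3 * (3 * n + 1) * (3 * n + 2) *
          ∑ j ∈ range (2 * n + 3), (-1) ^ j * ((2 * n).choose j : ℚ) ^ 3 := by
    rw [mul_sum, mul_sum, ← sum_add_distrib]
    exact sum_congr rfl fun _ _ => by ring
  rw [← htail]
  linear_combination (mul_eq_zero.1 telescope).resolve_left (by positivity) - hsplit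

theorem alternating_sum_choose_two_mul_pow_three (n : ℕ) :
    ∑ j ∈ range (2 * n + 1), (-1) ^ j * ((2 * n).choose j : ℚ) ^ 3
      = (-1) ^ n * (3 * n).factorial / (n.factorial : ℚ) ^ 3 := by
  induction n with
  | zero => simp
  | succ n ih =>
    have hfac : ((3 * (n + 1)).factorial : ℚ)
        = (3 * n + 1) * (3 * n + 2) * (3 * n + 3) * (3 * n).factorial := by
      rw [show 3 * (n + 1) = 3 * n + 1 + 1 + 1 by ring, Nat.factorial_succ, Nat.factorial_succ,
        Nat.factorial_succ]
      push_cast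
      ring
    have hn : ((n : ℚ) + 1) ^ 2 ≠ 0 := by positivity
    apply mul_left_cancel₀ hn
    rw [show 2 * (n + 1) + 1 = 2 * n + 3 by ring, show 2 * (n + 1) = 2 * n + 2 by ring,
      alternating_sum_choose_pow_three_recurrence, ih, hfac, Nat.factorial_succ]
    push_cast
    field_simp
    ring

theorem stmt0_general (p : ℕ) :
    ∑ k ∈ Finset.range (2 * p + 1),
        ((-1 : ℚ) ^ k * ((2 * p).choose k) * ((4 * p - k).choose (2 * p)) *
          ((2 * p + k).choose k))
      = (-1 : ℚ) ^ p * ((3 * p).factorial : ℚ) / ((p.factorial : ℚ)) ^ 3 := by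
  have h := congrArg (Int.cast : ℤ → ℚ)
    (alternating_sum_choose_mul_choose_two_mul_sub_mul_choose_add (2 * p))
  push_cast at h
  rw [show 4 * p = 2 * (2 * p) by ring, h]
  exact alternating_sum_choose_two_mul_pow_three p

theorem stmt0 (p : ℕ) (hp : 1 ≤ p) :
    ∑ k ∈ Finset.range (2 * p + 1),
        ((-1 : ℚ) ^ k * ((2 * p).choose k) * ((4 * p - k).choose (2 * p)) *
          ((2 * p + k).choose k))
      = (-1 : ℚ) ^ p * ((3 * p).factorial : ℚ) / ((p.factorial : ℚ)) ^ 3 :=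
  stmt0_general p
end

section
/- The polynomial f_m := ∑_{k=0}^{m−1} (−1)^k x_k x_{2m−k} + (1/2)(−1)^m x_m^2 lies in the kernel of the Weitzenböck derivation D_n, for every m with 1 ≤ m ≤ ⌊n/2⌋. -/
open MvPolynomial Finset

noncomputable def Dw (K : Type) [CommRing K] (n : ℕ) :
    Derivation K (MvPolynomial (Fin (n + 1)) K) (MvPolynomial (Fin (n + 1)) K) :=
  MvPolynomial.mkDerivation K fun i =>
    if i.1 = 0 then 0 else
      MvPolynomial.X ⟨i.1 - 1, Nat.lt_of_le_of_lt (Nat.sub_le _ _) i.isLt⟩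

open Fin.NatCast in
noncomputable def fpoly (K : Type) [Field K] (n m : ℕ) : MvPolynomial (Fin (n + 1)) K :=
  ∑ k ∈ Finset.range m,
      ((-1 : K) ^ k) • (X ((k : ℕ) : Fin (n + 1)) * X ((2 * m - k : ℕ) : Fin (n + 1)))
    + (((-1 : K) ^ m) / 2) • (X ((m : ℕ) : Fin (n + 1))) ^ 2


/-!
Write `y k` for `x_k`, so that `D y₀ = 0` and `D y_{k+1} = y_k`. By the Leibniz rule the derivative
of the `k`-th summand `(-1)^k y_k y_{2m-k}` is `G (k+1) - G k` with `G j = -(-1)^j (D y_j) y_{2m-j}`,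
so the sum telescopes to `G m = -(-1)^m y_m D y_m`, which is exactly cancelled by the derivative of
`(-1)^m y_m² / 2`.
-/

namespace Derivation

variable {R A : Type*} [CommRing R] [CommRing A] [Algebra R A]

theorem map_sum_neg_one_pow_smul_mul_sub (D : Derivation R A A) (y : ℕ → A) (m : ℕ)
    (h0 : D (y 0) = 0) (hsucc : ∀ i < 2 * m, D (y (i + 1)) = y i) :
    D (∑ k ∈ range m, (-1 : R) ^ k • (y k * y (2 * m - k))) =
      -((-1 : R) ^ m • (y m * D (y m))) := by
  set G : ℕ → A := fun j => -((-1 : R) ^ j • (D (y j) * y (2 * m - j))) with hG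
  have hstep : ∀ k ∈ range m,
      D ((-1 : R) ^ k • (y k * y (2 * m - k))) = G (k + 1) - G k := by
    intro k hk
    rw [mem_range] at hk
    have hfar : D (y (2 * m - k)) = y (2 * m - (k + 1)) := by
      rw [show 2 * m - k = 2 * m - (k + 1) + 1 by omega, hsucc _ (by omega)]
    rw [D.map_smul, D.leibniz, hfar, hG]
    simp only [hsucc k (by omega : k < 2 * m), pow_succ, smul_eq_mul, mul_neg_one, neg_smul,
      neg_neg, smul_add]
    rw [sub_neg_eq_add, mul_comm (y (2 * m - k))]
  rw [map_sum, sum_congr rfl hstep, sum_range_sub, hG]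
  simp only [h0, zero_mul, smul_zero, neg_zero, sub_zero, Nat.two_mul, Nat.add_sub_cancel,
    mul_comm (D (y m))]

theorem map_sum_neg_one_pow_smul_mul_sub_add_half_sq {K A : Type*} [Field K] [CommRing A]
    [Algebra K A] (h2 : (2 : K) ≠ 0) (D : Derivation K A A) (y : ℕ → A) (m : ℕ)
    (h0 : D (y 0) = 0) (hsucc : ∀ i < 2 * m, D (y (i + 1)) = y i) :
    D (∑ k ∈ range m, (-1 : K) ^ k • (y k * y (2 * m - k)) + ((-1 : K) ^ m / 2) • y m ^ 2) = 0 := by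
  have hsq : D (((-1 : K) ^ m / 2) • y m ^ 2) = (-1 : K) ^ m • (y m * D (y m)) := by
    rw [D.map_smul, D.leibniz_pow, pow_one, smul_eq_mul, ← Nat.cast_smul_eq_nsmul K, smul_smul,
      Nat.cast_ofNat, div_mul_cancel₀ _ h2]
  rw [map_add, map_sum_neg_one_pow_smul_mul_sub D y m h0 hsucc, hsq, neg_add_cancel]

end Derivation

section Weitzenbock

variable (K : Type) [CommRing K] (n : ℕ)

theorem Dw_X_zero : Dw K n (X 0) = 0 := by
  simp [Dw, mkDerivation_X]

open Fin.NatCast in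
theorem Dw_X_natCast_succ {i : ℕ} (hi : i < n) :
    Dw K n (X ((i + 1 : ℕ) : Fin (n + 1))) = X (i : Fin (n + 1)) := by
  have hval : (((i + 1 : ℕ) : Fin (n + 1)) : ℕ) = i + 1 := Fin.val_cast_of_lt (by omega)
  rw [Dw, mkDerivation_X]
  simp only [hval, Nat.add_one_ne_zero, if_false, Nat.add_sub_cancel]
  congr 1
  ext
  exact (Fin.val_cast_of_lt (by omega)).symm

end Weitzenbock

open Fin.NatCast in
theorem stmt1_general (K : Type) [Field K] [CharZero K] (n m : ℕ)
    (h2 : m ≤ n / 2) :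
    Dw K n (fpoly K n m) = 0 :=
  (Dw K n).map_sum_neg_one_pow_smul_mul_sub_add_half_sq two_ne_zero
    (fun k : ℕ => X (k : Fin (n + 1))) m (by simpa using Dw_X_zero K n)
    fun i hi => Dw_X_natCast_succ K n (by omega)

theorem stmt1 (K : Type) [Field K] [CharZero K] (n m : ℕ)
    (h1 : 1 ≤ m) (h2 : m ≤ n / 2) :
    Dw K n (fpoly K n m) = 0 :=
  stmt1_general K n m h2
end

section
/- The radical of the Hilbert ideal I_n := A_{n,+} R_n (the ideal of R_n generated by invariants of positive degree) equals the ideal (x_0, x_1, ..., x_{⌊n/2⌋}) of R_n. -/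
open MvPolynomial Finset
open Fin.NatCast

/-!
Give `x_i` the bidegree `(1, n - 2i)`. Then `D` shifts bidegrees by `(0, 2)`, and with
`E x_i = (i + 1)(n - i) x_{i+1}` and `H = [D, E]`, which multiplies a bihomogeneous polynomial by
the second component `μ` of its bidegree, it forms an `sl₂`-triple. Every bihomogeneous component
of an invariant is invariant, and for a nonzero invariant `f` of bidegree `(d, μ)` one gets
`D (E^(k+1) f) = (k + 1)(μ - k) E^k f`. Since `E^k f` has bidegree `(d, μ - 2k)` and a nonzero
polynomial of degree `d` has weight at least `-n d`, some `E^k f` vanishes; as the coefficients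
`(k + 1)(μ - k)` are nonzero when `μ < 0`, this forces `μ ≥ 0`.
A monomial of positive degree and nonnegative weight contains some `x_j` with `2 j ≤ n`, so the
Hilbert ideal lies in the prime ideal `(x_0, …, x_{⌊n/2⌋})`. Conversely, the invariant
`∑ j, (-1)^j x_j x_{2i-j}` equals `± x_i²` modulo `(x_0, …, x_{i-1})`, so by induction every
`x_i` with `2 i ≤ n` lies in the radical of the Hilbert ideal.
-/

namespace MvPolynomial

section Weighted

variable {σ R M : Type*} [CommSemiring R] [AddCommGroup M] [Fintype σ] {w : σ → M}

lemma mkDerivation_eq_sum_pderiv (v : σ → MvPolynomial σ R) (f : MvPolynomial σ R) :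
    mkDerivation R v f = ∑ i, pderiv i f * v i := by
  classical
  have : mkDerivation R v = ∑ i, v i • pderiv i :=
    derivation_ext fun j => by
      rw [mkDerivation_X, ← Derivation.coeFnAddMonoidHom_apply, map_sum]
      simp [pderiv_X, Pi.single_apply]
  rw [this, ← Derivation.coeFnAddMonoidHom_apply, map_sum]
  simp [mul_comm]

lemma IsWeightedHomogeneous.mkDerivation {v : σ → MvPolynomial σ R} {δ m : M}
    (hv : ∀ i, (v i).IsWeightedHomogeneous w (w i + δ)) {f : MvPolynomial σ R}
    (hf : f.IsWeightedHomogeneous w m) :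
    (mkDerivation R v f).IsWeightedHomogeneous w (m + δ) := by
  rw [mkDerivation_eq_sum_pderiv]
  refine IsWeightedHomogeneous.sum _ _ _ fun i _ => ?_
  have h := (hf.pderiv (sub_add_cancel m (w i))).mul (hv i)
  rwa [show m - w i + (w i + δ) = m + δ by abel] at h

lemma mkDerivation_smul_X_of_isWeightedHomogeneous (φ : M →+ R) {m : M} {f : MvPolynomial σ R}
    (hf : f.IsWeightedHomogeneous w m) :
    mkDerivation R (fun i => φ (w i) • X i) f = φ m • f := by
  induction hf using IsWeightedHomogeneous.induction_on with
  | zero => simp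
  | add p q _ _ hp hq => simp only [map_add, hp, hq, smul_add]
  | monomial d r hd =>
    rw [mkDerivation_eq_sum_pderiv, ← hd]
    simp only [mul_smul_comm, mul_comm _ (X _), X_mul_pderiv_monomial]
    rw [Finsupp.weight_apply, Finsupp.sum_fintype _ _ (by simp), map_sum, Finset.sum_smul]
    simp only [map_nsmul, smul_assoc]
    exact Finset.sum_congr rfl fun i _ => smul_comm _ _ _

end Weighted

lemma weightedHomogeneousComponent_apply_of_shift {σ R M : Type*} [CommSemiring R]
    [AddCancelCommMonoid M] {w : σ → M} {δ : M}
    (L : MvPolynomial σ R →ₗ[R] MvPolynomial σ R)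
    (hL : ∀ m f, f.IsWeightedHomogeneous w m → (L f).IsWeightedHomogeneous w (m + δ))
    (m : M) (f : MvPolynomial σ R) :
    weightedHomogeneousComponent w (m + δ) (L f) = L (weightedHomogeneousComponent w m f) := by
  classical
  conv_lhs => rw [← sum_weightedHomogeneousComponent w f,
    finsum_eq_sum _ (weightedHomogeneousComponent_finsupp f), map_sum, map_sum]
  rw [Finset.sum_eq_single m]
  · exact (hL _ _ <| weightedHomogeneousComponent_isWeightedHomogeneous m f)
      |>.weightedHomogeneousComponent_same
  · intro m' _ hm'
    exact (hL _ _ <| weightedHomogeneousComponent_isWeightedHomogeneous m' f)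
      |>.weightedHomogeneousComponent_ne _ fun h => hm' (add_right_cancel h).symm
  · intro hm
    rw [Function.notMem_support.1 ((Set.Finite.mem_toFinset _).not.1 hm), map_zero, map_zero]

lemma isPrime_span_X_image {σ R : Type*} [CommRing R] [IsDomain R] (s : Set σ) :
    (Ideal.span (X '' s : Set (MvPolynomial σ R))).IsPrime := by
  classical
  set J := Ideal.span (X '' s : Set (MvPolynomial σ R))
  let ψ : MvPolynomial σ R →ₐ[R] MvPolynomial σ R :=
    aeval fun i => if i ∈ s then 0 else X i
  have hψ : (Ideal.Quotient.mkₐ R J).comp ψ = Ideal.Quotient.mkₐ R J := by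
    refine algHom_ext fun i => ?_
    by_cases hi : i ∈ s
    · simp only [ψ, AlgHom.comp_apply, aeval_X, if_pos hi, map_zero]
      exact (Ideal.Quotient.eq_zero_iff_mem.2 <|
        Ideal.subset_span (Set.mem_image_of_mem _ hi)).symm
    · simp [ψ, hi]
  suffices J = RingHom.ker ψ from this ▸ RingHom.ker_isPrime _
  refine le_antisymm (Ideal.span_le.2 ?_) fun f hf => ?_
  · rintro _ ⟨i, hi, rfl⟩
    simp [ψ, hi]
  · rw [← Ideal.Quotient.eq_zero_iff_mem, ← Ideal.Quotient.mkₐ_eq_mk R, ← hψ,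
      AlgHom.comp_apply, show ψ f = 0 from hf, map_zero]

end MvPolynomial

section HighestWeight

variable {K V : Type*} [AddCommGroup V] {v : V} {μ : ℤ}

lemma apply_iterate_succ_of_highestWeight [CommRing K] [Module K V] {D E : V →ₗ[K] V}
    (hDv : D v = 0)
    (hDE : ∀ k : ℕ, D (E (E^[k] v)) = E (D (E^[k] v)) + ((μ - 2 * k : ℤ) : K) • E^[k] v)
    (k : ℕ) : D (E^[k + 1] v) = (((k + 1) * (μ - k) : ℤ) : K) • E^[k] v := by
  induction k with
  | zero => simpa [hDv] using hDE 0
  | succ k ih =>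
    rw [Function.iterate_succ_apply', hDE, ih, map_smul, ← Function.iterate_succ_apply' E,
      ← add_smul]
    congr 1
    push_cast
    ring

lemma highestWeight_nonneg [Field K] [CharZero K] [Module K V] {D E : V →ₗ[K] V}
    (hv : v ≠ 0) (hDv : D v = 0)
    (hDE : ∀ k : ℕ, D (E (E^[k] v)) = E (D (E^[k] v)) + ((μ - 2 * k : ℤ) : K) • E^[k] v)
    (hE : ∃ N, E^[N] v = 0) : 0 ≤ μ := by
  by_contra! hμ
  obtain ⟨N, hN⟩ := hE
  suffices ∀ k, E^[k] v ≠ 0 from this N hN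
  intro k
  induction k with
  | zero => exact hv
  | succ k ih =>
    intro hk
    have h := apply_iterate_succ_of_highestWeight hDv hDE k
    rw [hk, map_zero, eq_comm, smul_eq_zero] at h
    refine h.elim (fun hc => ?_) ih
    have : ((k : ℤ) + 1) * (μ - k) = 0 := by exact_mod_cast hc
    rcases mul_eq_zero.1 this with h | h <;> omega

end HighestWeight

namespace Weitzenbock

/-- The bidegree of `x_i`: its total degree and its weight for the `sl₂`-triple `(Dw, Ew, Hw)`. -/
def bideg (n : ℕ) (i : Fin (n + 1)) : ℤ × ℤ := (1, n - 2 * (i : ℕ))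

/-- For `i = n` the coefficient vanishes, so the wrap-around of `n + 1` to `0` in `Fin (n + 1)`
is harmless. -/
noncomputable def Ew (K : Type) [CommRing K] (n : ℕ) :
    Derivation K (MvPolynomial (Fin (n + 1)) K) (MvPolynomial (Fin (n + 1)) K) :=
  mkDerivation K fun i =>
    (((i : ℕ) + 1) * ((n : K) - (i : ℕ))) • X (((i : ℕ) + 1 : ℕ) : Fin (n + 1))

noncomputable def Hw (K : Type) [CommRing K] (n : ℕ) :
    Derivation K (MvPolynomial (Fin (n + 1)) K) (MvPolynomial (Fin (n + 1)) K) :=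
  mkDerivation K fun i => ((bideg n i).2 : K) • X i

noncomputable def hilbertIdeal (K : Type) [CommRing K] (n : ℕ) :
    Ideal (MvPolynomial (Fin (n + 1)) K) :=
  Ideal.span {f | Dw K n f = 0 ∧ constantCoeff f = 0}

variable {K : Type} {n : ℕ}

section CommRing

variable [CommRing K]

lemma Dw_X_zero : Dw K n (X 0) = 0 := by
  simp [Dw]

lemma Dw_X_natCast_succ {k : ℕ} (hk : k < n) :
    Dw K n (X ((k + 1 : ℕ) : Fin (n + 1))) = X (k : Fin (n + 1)) := by
  have hv : (((k + 1 : ℕ) : Fin (n + 1)) : ℕ) = k + 1 := Fin.val_cast_of_lt (by omega)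
  rw [Dw, mkDerivation_X, if_neg (by omega)]
  congr 1
  ext
  rw [Fin.val_mk, hv, Fin.val_cast_of_lt (by omega : k < n + 1), Nat.add_sub_cancel]

lemma Dw_X_natCast_of_ne_zero {k : ℕ} (hk : k ≤ n) (hk0 : k ≠ 0) :
    Dw K n (X (k : Fin (n + 1))) = X ((k - 1 : ℕ) : Fin (n + 1)) := by
  obtain ⟨j, rfl⟩ := Nat.exists_eq_succ_of_ne_zero hk0
  exact Dw_X_natCast_succ hk

lemma Ew_X_natCast {k : ℕ} (hk : k ≤ n) :
    Ew K n (X (k : Fin (n + 1))) =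
      ((k + 1) * ((n : K) - k)) • X ((k + 1 : ℕ) : Fin (n + 1)) := by
  rw [Ew, mkDerivation_X, Fin.val_cast_of_lt (by omega)]

lemma lie_Dw_Ew : ⁅Dw K n, Ew K n⁆ = Hw K n := by
  refine derivation_ext fun i => ?_
  obtain ⟨k, hk, rfl⟩ : ∃ k ≤ n, ((k : ℕ) : Fin (n + 1)) = i :=
    ⟨i, by omega, Fin.cast_val_eq_self i⟩
  have hDE : Dw K n (Ew K n (X (k : Fin (n + 1)))) =
      ((k + 1) * ((n : K) - k)) • X (k : Fin (n + 1)) := by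
    rw [Ew_X_natCast hk, Derivation.map_smul]
    rcases hk.lt_or_eq with hk | rfl
    · rw [Dw_X_natCast_succ hk]
    · simp
  have hED : Ew K n (Dw K n (X (k : Fin (n + 1)))) =
      (k * ((n : K) + 1 - k)) • X (k : Fin (n + 1)) := by
    rcases k with _ | j
    · simp [Dw_X_zero]
    · rw [Dw_X_natCast_succ (by omega), Ew_X_natCast (by omega)]
      push_cast
      ring_nf
  rw [Derivation.commutator_apply, hDE, hED, ← sub_smul, Hw, mkDerivation_X, bideg,
    Fin.val_cast_of_lt (by omega)]
  congr 1
  push_cast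
  ring

lemma weight_bideg (s : Fin (n + 1) →₀ ℕ) :
    Finsupp.weight (bideg n) s =
      (∑ i, (s i : ℤ), ∑ i, (s i : ℤ) * (n - 2 * (i : ℕ))) := by
  simp [Finsupp.weight_apply, Finsupp.sum_fintype, bideg, Prod.ext_iff, Prod.fst_sum,
    Prod.snd_sum]

lemma isWeightedHomogeneous_Dw {m : ℤ × ℤ} {f : MvPolynomial (Fin (n + 1)) K}
    (hf : f.IsWeightedHomogeneous (bideg n) m) :
    (Dw K n f).IsWeightedHomogeneous (bideg n) (m + (0, 2)) := by
  refine hf.mkDerivation fun i => ?_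
  split_ifs with hi
  · exact isWeightedHomogeneous_zero _ _ _
  · have hw : bideg n i + (0, 2) = bideg n ⟨(i : ℕ) - 1, by omega⟩ := by
      simp only [bideg, Prod.mk_add_mk, add_zero, Prod.mk.injEq, true_and]
      omega
    rw [hw]
    exact isWeightedHomogeneous_X K (bideg n) _

lemma isWeightedHomogeneous_Ew {m : ℤ × ℤ} {f : MvPolynomial (Fin (n + 1)) K}
    (hf : f.IsWeightedHomogeneous (bideg n) m) :
    (Ew K n f).IsWeightedHomogeneous (bideg n) (m + (0, -2)) := by
  refine hf.mkDerivation fun i => ?_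
  rcases (Nat.lt_succ_iff.1 i.isLt).lt_or_eq with hi | hi
  · have hw : bideg n i + (0, -2) = bideg n (((i : ℕ) + 1 : ℕ) : Fin (n + 1)) := by
      simp only [bideg, Prod.mk_add_mk, add_zero, Prod.mk.injEq, true_and,
        Fin.val_cast_of_lt (by omega : (i : ℕ) + 1 < n + 1)]
      omega
    rw [hw]
    exact (weightedHomogeneousSubmodule K _ _).smul_mem _ (isWeightedHomogeneous_X K _ _)
  · simp [hi, isWeightedHomogeneous_zero]

lemma iterate_Ew_isWeightedHomogeneous {d μ : ℤ} {f : MvPolynomial (Fin (n + 1)) K}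
    (hf : f.IsWeightedHomogeneous (bideg n) (d, μ)) (k : ℕ) :
    ((Ew K n)^[k] f).IsWeightedHomogeneous (bideg n) (d, μ - 2 * k) := by
  induction k with
  | zero => simpa using hf
  | succ k ih =>
    rw [Function.iterate_succ_apply']
    have := isWeightedHomogeneous_Ew ih
    rwa [show ((d, μ - 2 * k) + (0, -2) : ℤ × ℤ) = (d, μ - 2 * ↑(k + 1)) by
      ext <;> simp; ring] at this

lemma Hw_apply_of_isWeightedHomogeneous {m : ℤ × ℤ} {f : MvPolynomial (Fin (n + 1)) K}
    (hf : f.IsWeightedHomogeneous (bideg n) m) : Hw K n f = (m.2 : K) • f := by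
  simpa [Hw] using mkDerivation_smul_X_of_isWeightedHomogeneous
    ((Int.castAddHom K).comp (AddMonoidHom.snd ℤ ℤ)) hf

lemma neg_mul_le_of_isWeightedHomogeneous {d μ : ℤ} {f : MvPolynomial (Fin (n + 1)) K}
    (hf : f.IsWeightedHomogeneous (bideg n) (d, μ)) (hf0 : f ≠ 0) : -(n * d) ≤ μ := by
  obtain ⟨s, hs⟩ := exists_coeff_ne_zero hf0
  obtain ⟨rfl, rfl⟩ := Prod.ext_iff.1 ((weight_bideg s).symm.trans (hf hs))
  rw [Finset.mul_sum, ← Finset.sum_neg_distrib]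
  refine Finset.sum_le_sum fun i _ => ?_
  have := i.isLt
  nlinarith [(s i).cast_nonneg (α := ℤ)]

lemma exists_le_half_of_weight_nonneg {s : Fin (n + 1) →₀ ℕ} (hs : s ≠ 0)
    (hw : 0 ≤ (Finsupp.weight (bideg n) s).2) : ∃ j, s j ≠ 0 ∧ (j : ℕ) ≤ n / 2 := by
  by_contra! h
  obtain ⟨j, hj⟩ := Finsupp.ne_iff.1 hs
  rw [weight_bideg] at hw
  have hneg : ∀ i, s i ≠ 0 → (s i : ℤ) * (n - 2 * (i : ℕ)) < 0 := fun i hi =>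
    mul_neg_of_pos_of_neg (by positivity) (by have := h i hi; omega)
  have hlt : ∑ i, (s i : ℤ) * (n - 2 * (i : ℕ)) < ∑ _i : Fin (n + 1), 0 :=
    Finset.sum_lt_sum (fun i _ => (eq_or_ne (s i) 0).elim (fun h0 => by simp [h0])
      fun hi => (hneg i hi).le) ⟨j, mem_univ j, hneg j hj⟩
  rw [sum_const_zero] at hlt
  exact hw.not_gt hlt

lemma Dw_alternatingSum_eq_zero {m : ℕ} (hm : m ≤ n) :
    Dw K n (∑ j ∈ range (m + 1),
      (-1 : K) ^ j • (X (j : Fin (n + 1)) * X ((m - j : ℕ) : Fin (n + 1)))) = 0 := by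
  simp only [map_sum, Derivation.map_smul, Derivation.leibniz, smul_eq_mul, smul_add,
    sum_add_distrib]
  rw [sum_range_succ, sum_range_succ', Nat.sub_self, Nat.cast_zero, Dw_X_zero]
  simp only [mul_zero, smul_zero, add_zero, ← sum_add_distrib]
  refine sum_eq_zero fun j hj => ?_
  rw [mem_range] at hj
  rw [Dw_X_natCast_of_ne_zero (by omega) (by omega), Dw_X_natCast_succ (by omega),
    show m - j - 1 = m - (j + 1) by omega, pow_succ, mul_neg_one, neg_smul, mul_comm (X _)]
  exact add_neg_cancel _

lemma X_natCast_mem_radical {i : ℕ} (hi : 2 * i ≤ n) :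
    X (i : Fin (n + 1)) ∈ (hilbertIdeal K n).radical := by
  induction i using Nat.strong_induction_on with
  | _ i ih =>
  set x : ℕ → MvPolynomial (Fin (n + 1)) K := fun j => X (j : Fin (n + 1))
  set q := ∑ j ∈ range (2 * i + 1), (-1 : K) ^ j • (x j * x (2 * i - j)) with hq_def
  set r := ∑ j ∈ (range (2 * i + 1)).erase i, (-1 : K) ^ j • (x j * x (2 * i - j)) with hr_def
  have hq : q ∈ (hilbertIdeal K n).radical := Ideal.le_radical <|
    Ideal.subset_span ⟨Dw_alternatingSum_eq_zero hi, by simp [q, x, smul_eq_C_mul]⟩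
  have hr : r ∈ (hilbertIdeal K n).radical := by
    refine Ideal.sum_mem _ fun j hj => ?_
    obtain ⟨hji, hj⟩ := mem_erase.1 hj
    rw [mem_range] at hj
    rw [smul_eq_C_mul]
    refine Ideal.mul_mem_left _ _ ?_
    rcases hji.lt_or_gt with hlt | hgt
    · exact Ideal.mul_mem_right _ _ (ih j hlt (by omega))
    · exact Ideal.mul_mem_left _ _ (ih (2 * i - j) (by omega) (by omega))
  have hsq : x i ^ 2 = (-1 : K) ^ i • (q - r) := by
    rw [hq_def, hr_def, ← add_sum_erase _ _ (mem_range.2 (by omega : i < 2 * i + 1)),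
      add_sub_cancel_right, smul_smul, ← pow_add, ← two_mul, pow_mul, neg_one_sq, one_pow,
      one_smul, show 2 * i - i = i by omega, sq]
  refine Ideal.mem_radical_of_pow_mem (m := 2) ?_
  rw [hsq, smul_eq_C_mul]
  exact Ideal.mul_mem_left _ _ (Ideal.sub_mem _ hq hr)

end CommRing

section CharZero

variable [Field K] [CharZero K]

lemma nonneg_of_isWeightedHomogeneous_of_Dw_eq_zero {d μ : ℤ}
    {f : MvPolynomial (Fin (n + 1)) K} (hf : f.IsWeightedHomogeneous (bideg n) (d, μ))
    (hf0 : f ≠ 0) (hD : Dw K n f = 0) : 0 ≤ μ := by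
  refine highestWeight_nonneg (D := (Dw K n : _ →ₗ[K] _)) (E := Ew K n) hf0 hD (fun k => ?_)
    ⟨(μ + n * d + 1).toNat, ?_⟩
  · have h := congr($(lie_Dw_Ew (K := K) (n := n)) ((Ew K n)^[k] f))
    rw [Derivation.commutator_apply,
      Hw_apply_of_isWeightedHomogeneous (iterate_Ew_isWeightedHomogeneous hf k)] at h
    simp only [Derivation.coeFn_coe]
    rw [← h, add_sub_cancel]
  · by_contra h
    have := neg_mul_le_of_isWeightedHomogeneous (iterate_Ew_isWeightedHomogeneous hf _) h
    omega

lemma weight_nonneg_of_mem_support {f : MvPolynomial (Fin (n + 1)) K} (hD : Dw K n f = 0)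
    {s : Fin (n + 1) →₀ ℕ} (hs : s ∈ f.support) : 0 ≤ (Finsupp.weight (bideg n) s).2 := by
  classical
  set m := Finsupp.weight (bideg n) s
  have hcomp : weightedHomogeneousComponent (bideg n) m f ≠ 0 := fun h => by
    have := congr_arg (coeff s) h
    rw [coeff_weightedHomogeneousComponent, if_pos rfl, coeff_zero] at this
    exact mem_support_iff.1 hs this
  have hDcomp : Dw K n (weightedHomogeneousComponent (bideg n) m f) = 0 := by
    have := weightedHomogeneousComponent_apply_of_shift (Dw K n : _ →ₗ[K] _)
      (fun _ _ => isWeightedHomogeneous_Dw) m f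
    simpa [hD] using this.symm
  exact nonneg_of_isWeightedHomogeneous_of_Dw_eq_zero
    (weightedHomogeneousComponent_isWeightedHomogeneous m f) hcomp hDcomp

lemma mem_span_X_of_Dw_eq_zero {f : MvPolynomial (Fin (n + 1)) K} (hD : Dw K n f = 0)
    (hc : constantCoeff f = 0) :
    f ∈ Ideal.span (X '' {j : Fin (n + 1) | (j : ℕ) ≤ n / 2}) := by
  refine mem_ideal_span_X_image.2 fun s hs => ?_
  have hs0 : s ≠ 0 := by
    rintro rfl
    exact mem_support_iff.1 hs (by rwa [← constantCoeff_eq])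
  obtain ⟨j, hj, hjn⟩ :=
    exists_le_half_of_weight_nonneg hs0 (weight_nonneg_of_mem_support hD hs)
  exact ⟨j, hjn, hj⟩

end CharZero

end Weitzenbock

lemma Fin.image_natCast_setOf_le {n m : ℕ} (hm : m ≤ n) :
    ((↑) '' {i : ℕ | i ≤ m} : Set (Fin (n + 1))) = {j : Fin (n + 1) | (j : ℕ) ≤ m} := by
  ext j
  constructor
  · rintro ⟨i, hi : i ≤ m, rfl⟩
    show ((i : Fin (n + 1)) : ℕ) ≤ m
    rwa [Fin.val_cast_of_lt (by omega)]
  · exact fun hj => ⟨j, hj, Fin.cast_val_eq_self j⟩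

theorem stmt5 (K : Type) [Field K] [CharZero K] (n : ℕ) :
    (Ideal.span {f : MvPolynomial (Fin (n + 1)) K |
        Dw K n f = 0 ∧ MvPolynomial.constantCoeff f = 0}).radical
      = Ideal.span ((fun i : ℕ => (X ((i : ℕ) : Fin (n + 1)) :
          MvPolynomial (Fin (n + 1)) K)) '' {i : ℕ | i ≤ n / 2}) := by
  rw [← Set.image_image X, Fin.image_natCast_setOf_le (Nat.div_le_self n 2)]
  refine le_antisymm ?_ (Ideal.span_le.2 ?_)
  · rw [(isPrime_span_X_image _).radical_le_iff, Ideal.span_le]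
    exact fun f ⟨hD, hc⟩ => Weitzenbock.mem_span_X_of_Dw_eq_zero hD hc
  · rintro _ ⟨j, hj : (j : ℕ) ≤ n / 2, rfl⟩
    exact Fin.cast_val_eq_self j ▸ Weitzenbock.X_natCast_mem_radical (K := K) (by omega)
end
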